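/- arXiv:2601.16579 — 4 statements merged into one kernel-verified Lean document; each statement's English description precedes it below -/
import Mathlib

section
/- Consider n agents with identical additive valuation v over M, with PS = v(M)/n. If D is an ex-ante proportional distribution over allocations that minimizes the sum of agents' variances Σ_i Var_{A∼D}[v(A_i)] among all ex-ante proportional distributions, then every allocation P in the support of D minimizes the squared Euclidean distance ‖v(P) − (PS,...,PS)‖² over all allocations of M into n bundles, and moreover the minimal sum-of-variances equals this minimal squared distance. -/
/-- Value of agent `i`'s bundle in allocation `A` under additive valuation `v`. -/
def bundleVal {M : Type*} [Fintype M] {n : ℕ} (v : M → ℝ) (A : M → Fin n) (i : Fin n) : ℝ :=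
  ∑ g, if A g = i then v g else 0

/-- Sum over agents of the variance of their bundle value under distribution `p`. -/
def sumVar {M : Type*} [Fintype M] [DecidableEq M] {n : ℕ} (v : M → ℝ)
    (p : (M → Fin n) → ℝ) : ℝ :=
  ∑ i : Fin n, ∑ A : M → Fin n,
    p A * (bundleVal v A i - ∑ B : M → Fin n, p B * bundleVal v B i) ^ 2

/-- `p` is an ex-ante proportional distribution over allocations for `n` agents
with identical valuation `v`. -/
def IsPropDist {M : Type*} [Fintype M] [DecidableEq M] {n : ℕ} (v : M → ℝ)
    (p : (M → Fin n) → ℝ) : Prop :=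
  (∀ A, 0 ≤ p A) ∧ (∑ A : M → Fin n, p A = 1) ∧
    ∀ i : Fin n, (∑ g, v g) / n ≤ ∑ A : M → Fin n, p A * bundleVal v A i

lemma bundleVal_sum {M : Type*} [Fintype M] {n : ℕ} (v : M → ℝ) (A : M → Fin n) :
    ∑ i : Fin n, bundleVal v A i = ∑ g, v g := by
  unfold bundleVal
  rw [Finset.sum_comm]
  simp [Finset.sum_ite_eq']

lemma mean_eq {M : Type*} [Fintype M] [DecidableEq M] {n : ℕ} (hn : 0 < n) (v : M → ℝ)
    (p : (M → Fin n) → ℝ) (hsum : ∑ A : M → Fin n, p A = 1)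
    (hge : ∀ i : Fin n, (∑ g, v g) / n ≤ ∑ A : M → Fin n, p A * bundleVal v A i)
    (i : Fin n) : ∑ A : M → Fin n, p A * bundleVal v A i = (∑ g, v g) / n := by
  set S := ∑ g, v g with hS
  have htot : ∑ j : Fin n, ∑ A : M → Fin n, p A * bundleVal v A j = S := by
    rw [Finset.sum_comm]
    have : ∀ A : M → Fin n, ∑ j : Fin n, p A * bundleVal v A j = p A * S := by
      intro A; rw [← Finset.mul_sum, bundleVal_sum]
    simp_rw [this, ← Finset.sum_mul, hsum, one_mul]
  by_contra h
  have hlt : S / n < ∑ A : M → Fin n, p A * bundleVal v A i := lt_of_le_of_ne (hge i) (Ne.symm h)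
  have : ∑ j : Fin n, (S / n) < ∑ j : Fin n, ∑ A : M → Fin n, p A * bundleVal v A j :=
    Finset.sum_lt_sum (fun j _ => hge j) ⟨i, Finset.mem_univ i, hlt⟩
  rw [htot, Finset.sum_const, Finset.card_univ, Fintype.card_fin] at this
  have hne : (n:ℝ) ≠ 0 := Nat.cast_ne_zero.mpr hn.ne'
  rw [nsmul_eq_mul, mul_div_cancel₀ _ hne] at this
  exact lt_irrefl _ this

lemma sumVar_eq {M : Type*} [Fintype M] [DecidableEq M] {n : ℕ} (hn : 0 < n) (v : M → ℝ)
    (p : (M → Fin n) → ℝ) (hp : IsPropDist v p) :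
    sumVar v p = ∑ A : M → Fin n, p A * ∑ i : Fin n, (bundleVal v A i - (∑ g, v g) / n) ^ 2 := by
  unfold sumVar
  have hm := mean_eq hn v p hp.2.1 hp.2.2
  simp_rw [hm]
  rw [Finset.sum_comm]
  simp_rw [Finset.mul_sum]

lemma shift_dist {M : Type*} [Fintype M] [DecidableEq M] {n : ℕ} (hn : 0 < n) (v : M → ℝ)
    (Q : M → Fin n) :
    ∃ q : (M → Fin n) → ℝ, IsPropDist v q ∧
      sumVar v q = ∑ i : Fin n, (bundleVal v Q i - (∑ g, v g) / n) ^ 2 := by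
  haveI : NeZero n := ⟨hn.ne'⟩
  set S := ∑ g, v g with hS
  set q : (M → Fin n) → ℝ :=
    fun A => (1 / n) * ∑ k : Fin n, (if A = fun g => Q g + k then 1 else 0) with hq
  have hsum_q : ∀ f : (M → Fin n) → ℝ,
      ∑ A : M → Fin n, q A * f A = (1 / n) * ∑ k : Fin n, f (fun g => Q g + k) := by
    intro f
    simp_rw [hq, mul_assoc, ← Finset.mul_sum, Finset.sum_mul, ite_mul, one_mul, zero_mul]
    rw [Finset.sum_comm]
    simp [Finset.sum_ite_eq]
  have hbshift : ∀ (k i : Fin n), bundleVal v (fun g => Q g + k) i = bundleVal v Q (i - k) := by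
    intro k i
    unfold bundleVal
    apply Finset.sum_congr rfl
    intro g _
    congr 1
    simp [eq_sub_iff_add_eq]
  have hmean : ∀ i : Fin n, ∑ A : M → Fin n, q A * bundleVal v A i = S / n := by
    intro i
    rw [hsum_q (fun A => bundleVal v A i)]
    simp_rw [hbshift]
    rw [Fintype.sum_equiv (Equiv.subLeft i) (fun k => bundleVal v Q (i - k))
      (fun j => bundleVal v Q j) (fun k => rfl)]
    rw [bundleVal_sum, one_div, inv_mul_eq_div]
  have hprop : IsPropDist v q := by
    refine ⟨?_, ?_, ?_⟩
    · intro A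
      apply mul_nonneg (by positivity)
      apply Finset.sum_nonneg; intro k _; positivity
    · have := hsum_q (fun _ => 1)
      simp only [mul_one] at this
      rw [this]
      simp only [Finset.sum_const, Finset.card_univ, Fintype.card_fin, nsmul_eq_mul, mul_one]
      rw [one_div, inv_mul_cancel₀ (Nat.cast_ne_zero.mpr hn.ne' : (n:ℝ) ≠ 0)]
    · intro i; rw [hmean i]
  refine ⟨q, hprop, ?_⟩
  unfold sumVar
  simp_rw [hmean]
  have : ∀ i : Fin n, ∑ A : M → Fin n, q A * (bundleVal v A i - S / n) ^ 2
      = (1 / n) * ∑ k : Fin n, (bundleVal v Q (i - k) - S / n) ^ 2 := by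
    intro i
    rw [hsum_q (fun A => (bundleVal v A i - S / n) ^ 2)]
    simp_rw [hbshift]
  simp_rw [this]
  rw [← Finset.mul_sum, Finset.sum_comm]
  have : ∀ k : Fin n, ∑ i : Fin n, (bundleVal v Q (i - k) - S / n) ^ 2
      = ∑ i : Fin n, (bundleVal v Q i - S / n) ^ 2 := by
    intro k
    exact Fintype.sum_equiv (Equiv.subRight k) _ _ (fun i => rfl)
  simp_rw [this, Finset.sum_const, Finset.card_univ, Fintype.card_fin, nsmul_eq_mul]
  rw [← mul_assoc]
  rw [one_div, inv_mul_cancel₀ (Nat.cast_ne_zero.mpr hn.ne' : (n:ℝ) ≠ 0), one_mul]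

/-- if `p` minimizes the sum of variances among ex-ante proportional
distributions (identical valuations), then every allocation in its support minimizes
the squared Euclidean distance of its value vector to `(PS,…,PS)`, and the minimal
sum-of-variances equals that minimal squared distance. -/
theorem sov_minimizer_support_is_distance_minimizing {M : Type*} [Fintype M] [DecidableEq M]
    {n : ℕ} (hn : 0 < n) (v : M → ℝ) (hv : ∀ g, 0 ≤ v g)
    (p : (M → Fin n) → ℝ) (hprop : IsPropDist v p)
    (hmin : ∀ q : (M → Fin n) → ℝ, IsPropDist v q → sumVar v p ≤ sumVar v q) :
    (∀ P : M → Fin n, 0 < p P → ∀ Q : M → Fin n,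
        ∑ i : Fin n, (bundleVal v P i - (∑ g, v g) / n) ^ 2
          ≤ ∑ i : Fin n, (bundleVal v Q i - (∑ g, v g) / n) ^ 2) ∧
    (∀ P : M → Fin n, 0 < p P →
        sumVar v p = ∑ i : Fin n, (bundleVal v P i - (∑ g, v g) / n) ^ 2) := by
  haveI : NeZero n := ⟨hn.ne'⟩
  set f : (M → Fin n) → ℝ := fun A => ∑ i : Fin n, (bundleVal v A i - (∑ g, v g) / n) ^ 2 with hf
  -- sumVar p ≤ f Q for all Q
  have hle : ∀ Q : M → Fin n, sumVar v p ≤ f Q := by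
    intro Q
    obtain ⟨q, hq1, hq2⟩ := shift_dist hn v Q
    exact (hmin q hq1).trans_eq hq2
  have hsv : sumVar v p = ∑ A : M → Fin n, p A * f A := sumVar_eq hn v p hprop
  -- pick a minimizer of f
  obtain ⟨Q0, _, hQ0⟩ := Finset.exists_min_image Finset.univ f Finset.univ_nonempty
  have hQ0' : ∀ Q : M → Fin n, f Q0 ≤ f Q := fun Q => hQ0 Q (Finset.mem_univ Q)
  -- sumVar p = f Q0
  have hge : f Q0 ≤ sumVar v p := by
    rw [hsv]
    calc f Q0 = ∑ A : M → Fin n, p A * f Q0 := by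
          rw [← Finset.sum_mul, hprop.2.1, one_mul]
      _ ≤ ∑ A : M → Fin n, p A * f A :=
          Finset.sum_le_sum fun A _ => mul_le_mul_of_nonneg_left (hQ0' A) (hprop.1 A)
  have heq : sumVar v p = f Q0 := le_antisymm (hle Q0) hge
  -- support elements achieve the minimum
  have hsupp : ∀ P : M → Fin n, 0 < p P → f P = f Q0 := by
    intro P hP
    by_contra h
    have hlt : f Q0 < f P := lt_of_le_of_ne (hQ0' P) (Ne.symm h)
    have : ∑ A : M → Fin n, p A * f Q0 < ∑ A : M → Fin n, p A * f A :=
      Finset.sum_lt_sum (fun A _ => mul_le_mul_of_nonneg_left (hQ0' A) (hprop.1 A))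
        ⟨P, Finset.mem_univ P, mul_lt_mul_of_pos_left hlt hP⟩
    rw [← Finset.sum_mul, hprop.2.1, one_mul, ← hsv, heq] at this
    exact lt_irrefl _ this
  constructor
  · intro P hP Q
    calc f P = f Q0 := hsupp P hP
      _ ≤ f Q := hQ0' Q
  · intro P hP
    rw [heq, ← hsupp P hP]
end

section
/- Consider n ≥ 2 agents with identical additive valuation v over M where every good has strictly positive value, and let PS = v(M)/n. Any allocation B = (B_1,...,B_n) that minimizes ‖v(B) − (PS,...,PS)‖² over all allocations of M into n bundles is EFX: for every pair of agents i, l and every good g ∈ B_i, v(B_i \ {g}) ≤ v(B_l). -/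
/-- for `n ≥ 2` agents with identical additive valuation `v` in which every
good has strictly positive value, any allocation minimizing the squared Euclidean distance
of its value vector to `(PS,…,PS)` (with `PS = v(M)/n`) is EFX: removing any good `g` from
any bundle `B_i` leaves value at most that of every other bundle `B_l`. -/
theorem distance_minimizing_implies_EFX {M : Type*} [Fintype M] [DecidableEq M]
    {n : ℕ} (hn : 2 ≤ n) (v : M → ℝ) (hv : ∀ g, 0 < v g) (B : M → Fin n)
    (hmin : ∀ C : M → Fin n,
      ∑ i : Fin n, (bundleVal v B i - (∑ g, v g) / n) ^ 2
        ≤ ∑ i : Fin n, (bundleVal v C i - (∑ g, v g) / n) ^ 2) :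
    ∀ i l : Fin n, i ≠ l → ∀ g : M, B g = i →
      bundleVal v B i - v g ≤ bundleVal v B l := by
  intro i l hil g hg
  set PS : ℝ := (∑ g, v g) / n with hPS
  set C : M → Fin n := fun x => if x = g then l else B x with hC
  have hCg : C g = l := by simp [hC]
  have hCx : ∀ x, x ≠ g → C x = B x := by intro x hx; simp [hC, hx]
  have split : ∀ (f : M → ℝ),
      ∑ x, f x = (∑ x ∈ Finset.univ.erase g, f x) + f g :=
    fun f => (Finset.sum_erase_add _ _ (Finset.mem_univ g)).symm
  have erase_eq : ∀ j : Fin n,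
      (∑ x ∈ Finset.univ.erase g, if C x = j then v x else 0)
        = ∑ x ∈ Finset.univ.erase g, if B x = j then v x else 0 := by
    intro j
    refine Finset.sum_congr rfl fun x hx => ?_
    rw [hCx x (Finset.ne_of_mem_erase hx)]
  have hCi : bundleVal v C i = bundleVal v B i - v g := by
    unfold bundleVal
    rw [split (fun x => if C x = i then v x else 0),
        split (fun x => if B x = i then v x else 0), erase_eq]
    simp [hCg, hil.symm, hg]
  have hCl : bundleVal v C l = bundleVal v B l + v g := by
    unfold bundleVal
    rw [split (fun x => if C x = l then v x else 0),
        split (fun x => if B x = l then v x else 0), erase_eq]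
    simp [hCg, hg, hil]
  have hCj : ∀ j : Fin n, j ≠ i → j ≠ l → bundleVal v C j = bundleVal v B j := by
    intro j hji hjl
    unfold bundleVal
    rw [split (fun x => if C x = j then v x else 0),
        split (fun x => if B x = j then v x else 0), erase_eq]
    simp [hCg, hg, hji.symm, hjl.symm]
  have h := hmin C
  set d : Fin n → ℝ := fun j => (bundleVal v C j - PS) ^ 2 - (bundleVal v B j - PS) ^ 2
    with hd
  have hsum : (0 : ℝ) ≤ ∑ j, d j := by
    have := Finset.sum_sub_distrib (s := Finset.univ)
      (f := fun j => (bundleVal v C j - PS) ^ 2)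
      (g := fun j => (bundleVal v B j - PS) ^ 2)
    simp only [hd]
    rw [this]
    linarith
  have hsub : ({i, l} : Finset (Fin n)) ⊆ Finset.univ := Finset.subset_univ _
  have hzero : ∀ j ∈ Finset.univ, j ∉ ({i, l} : Finset (Fin n)) → d j = 0 := by
    intro j _ hj
    simp only [Finset.mem_insert, Finset.mem_singleton, not_or] at hj
    simp [hd, hCj j hj.1 hj.2]
  have hsum2 : ∑ j, d j = d i + d l := by
    rw [← Finset.sum_subset hsub hzero, Finset.sum_pair hil]
  rw [hsum2] at hsum
  simp only [hd, hCi, hCl] at hsum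
  nlinarith [hv g, sq_nonneg (v g)]
end

section
/- There exists an instance of three agents with identical additive valuations over six goods for which every ex-ante proportional sum-of-variances-minimizing distribution over allocations fails to be MMS-fair ex-post: every allocation in its support gives some agent a bundle of value 825 while the MMS is 912, i.e., only a 275/304 fraction of the MMS. -/
set_option maxRecDepth 10000

/-- Value of agent `i`'s bundle in allocation `A` of 6 goods to 3 agents. -/
def bval9 (v : Fin 6 → ℝ) (A : Fin 6 → Fin 3) (i : Fin 3) : ℝ :=
  ∑ g, if A g = i then v g else 0

/-- Sum over agents of the variance of their bundle value under distribution `p`. -/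
def sumVar9 (v : Fin 6 → ℝ) (p : (Fin 6 → Fin 3) → ℝ) : ℝ :=
  ∑ i : Fin 3, ∑ A : Fin 6 → Fin 3,
    p A * (bval9 v A i - ∑ B : Fin 6 → Fin 3, p B * bval9 v B i) ^ 2

/-- `p` is an ex-ante proportional distribution for 3 agents with identical valuation `v`. -/
def IsPropDist9 (v : Fin 6 → ℝ) (p : (Fin 6 → Fin 3) → ℝ) : Prop :=
  (∀ A, 0 ≤ p A) ∧ (∑ A : Fin 6 → Fin 3, p A = 1) ∧
    ∀ i : Fin 3, (∑ g, v g) / 3 ≤ ∑ A : Fin 6 → Fin 3, p A * bval9 v A i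

/- ### Auxiliary integer-valued versions -/

def vz : Fin 6 → ℤ := ![825, 552, 528, 384, 360, 351]

def vR : Fin 6 → ℝ := fun g => (vz g : ℝ)

def bz (A : Fin 6 → Fin 3) (i : Fin 3) : ℤ := ∑ g, if A g = i then vz g else 0

def dz (A : Fin 6 → Fin 3) : ℤ := ∑ i, (bz A i - 1000) ^ 2

lemma bval_cast (A : Fin 6 → Fin 3) (i : Fin 3) : bval9 vR A i = (bz A i : ℝ) := by
  simp [bval9, bz, vR, apply_ite (fun z : ℤ => (z : ℝ))]

lemma P1 : ∀ A : Fin 6 → Fin 3, ∃ i, bz A i ≤ 912 := by decide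

lemma P2 : ∀ A : Fin 6 → Fin 3, 46050 ≤ dz A := by decide

lemma P3 : ∀ A : Fin 6 → Fin 3, dz A = 46050 → ∃ i, bz A i = 825 := by decide

lemma sum_vz : (∑ g, vz g) = 3000 := by decide

lemma sum_vR : (∑ g, vR g) = 3000 := by
  have : (∑ g, vR g) = ((∑ g, vz g : ℤ) : ℝ) := by
    rw [Int.cast_sum]
    exact Finset.sum_congr rfl fun g _ => rfl
  rw [this, sum_vz]; norm_num

lemma sum_bz (A : Fin 6 → Fin 3) : ∑ i : Fin 3, bz A i = 3000 := by
  unfold bz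
  rw [Finset.sum_comm]
  have : ∀ g : Fin 6, ∑ i : Fin 3, (if A g = i then vz g else 0) = vz g := by
    intro g; simp
  rw [Finset.sum_congr rfl fun g _ => this g, sum_vz]

lemma sum_bval (A : Fin 6 → Fin 3) : ∑ i : Fin 3, bval9 vR A i = 3000 := by
  have : ∑ i : Fin 3, bval9 vR A i = ((∑ i : Fin 3, bz A i : ℤ) : ℝ) := by
    rw [Int.cast_sum]
    exact Finset.sum_congr rfl fun i _ => bval_cast A i
  rw [this, sum_bz]; norm_num

/-- For any proportional distribution, each agent's expected value is exactly 1000. -/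
lemma mean_eq_s9 (p : (Fin 6 → Fin 3) → ℝ) (hp : IsPropDist9 vR p) (i : Fin 3) :
    ∑ B : Fin 6 → Fin 3, p B * bval9 vR B i = 1000 := by
  obtain ⟨hnn, hsum, hprop⟩ := hp
  have key : ∑ j : Fin 3, (∑ B : Fin 6 → Fin 3, p B * bval9 vR B j) = 3000 := by
    rw [Finset.sum_comm]
    have : ∀ B : Fin 6 → Fin 3, ∑ j : Fin 3, p B * bval9 vR B j = p B * 3000 := by
      intro B
      rw [← Finset.mul_sum, sum_bval]
    rw [Finset.sum_congr rfl fun B _ => this B, ← Finset.sum_mul, hsum, one_mul]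
  have h0 := hprop 0
  have h1 := hprop 1
  have h2 := hprop 2
  rw [sum_vR] at h0 h1 h2
  rw [Fin.sum_univ_three] at key
  fin_cases i
  · show ∑ B : Fin 6 → Fin 3, p B * bval9 vR B 0 = 1000
    linarith
  · show ∑ B : Fin 6 → Fin 3, p B * bval9 vR B 1 = 1000
    linarith
  · show ∑ B : Fin 6 → Fin 3, p B * bval9 vR B 2 = 1000
    linarith

/-- Rewrite sumVar as the expectation of the per-allocation squared deviation. -/
lemma sumVar_eq_s9 (p : (Fin 6 → Fin 3) → ℝ) (hp : IsPropDist9 vR p) :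
    sumVar9 vR p = ∑ A : Fin 6 → Fin 3, p A * (dz A : ℝ) := by
  unfold sumVar9
  rw [Finset.sum_comm]
  refine Finset.sum_congr rfl fun A _ => ?_
  have h1 : ∀ i : Fin 3, p A * (bval9 vR A i - ∑ B : Fin 6 → Fin 3, p B * bval9 vR B i) ^ 2
      = p A * (bval9 vR A i - 1000) ^ 2 := by
    intro i; rw [mean_eq_s9 p hp i]
  rw [Finset.sum_congr rfl fun i _ => h1 i, ← Finset.mul_sum]
  congr 1
  rw [dz]
  push_cast
  exact Finset.sum_congr rfl fun i _ => by rw [bval_cast]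

/- ### The benchmark distribution: uniform over 3 cyclic shifts of the optimal partition -/

def A1 : Fin 6 → Fin 3 := ![0, 1, 1, 2, 2, 2]
def A2 : Fin 6 → Fin 3 := ![1, 2, 2, 0, 0, 0]
def A3 : Fin 6 → Fin 3 := ![2, 0, 0, 1, 1, 1]

noncomputable def qstar : (Fin 6 → Fin 3) → ℝ := fun A =>
  (if A = A1 then (1:ℝ)/3 else 0) + (if A = A2 then (1:ℝ)/3 else 0) +
    (if A = A3 then (1:ℝ)/3 else 0)

lemma qstar_sum (f : (Fin 6 → Fin 3) → ℝ) :
    ∑ A : Fin 6 → Fin 3, qstar A * f A = (f A1 + f A2 + f A3) / 3 := by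
  have h : ∀ A : Fin 6 → Fin 3, qstar A * f A =
      (if A = A1 then f A1 / 3 else 0) + ((if A = A2 then f A2 / 3 else 0) +
        (if A = A3 then f A3 / 3 else 0)) := by
    intro A
    unfold qstar
    by_cases h1 : A = A1 <;> by_cases h2 : A = A2 <;> by_cases h3 : A = A3 <;>
      subst_vars <;> simp_all <;> ring
  rw [Finset.sum_congr rfl fun A _ => h A]
  rw [Finset.sum_add_distrib, Finset.sum_add_distrib]
  simp [Finset.sum_ite_eq' Finset.univ]
  ring

lemma bz_cyc : ∀ i : Fin 3, bz A1 i + bz A2 i + bz A3 i = 3000 := by decide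

lemma qstar_prop : IsPropDist9 vR qstar := by
  refine ⟨?_, ?_, ?_⟩
  · intro A; unfold qstar
    have h1 : (0:ℝ) ≤ if A = A1 then (1:ℝ)/3 else 0 := by split <;> norm_num
    have h2 : (0:ℝ) ≤ if A = A2 then (1:ℝ)/3 else 0 := by split <;> norm_num
    have h3 : (0:ℝ) ≤ if A = A3 then (1:ℝ)/3 else 0 := by split <;> norm_num
    linarith
  · have h := qstar_sum (fun _ => 1)
    norm_num at h
    exact h
  · intro i
    rw [sum_vR, qstar_sum (fun A => bval9 vR A i), bval_cast A1 i, bval_cast A2 i,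
      bval_cast A3 i]
    have h : ((bz A1 i + bz A2 i + bz A3 i : ℤ) : ℝ) = 3000 := by
      exact_mod_cast bz_cyc i
    push_cast at h
    linarith

lemma qstar_sumVar : sumVar9 vR qstar = 46050 := by
  rw [sumVar_eq_s9 qstar qstar_prop, qstar_sum (fun A => (dz A : ℝ))]
  have h1 : dz A1 = 46050 := by decide
  have h2 : dz A2 = 46050 := by decide
  have h3 : dz A3 = 46050 := by decide
  rw [h1, h2, h3]
  norm_num

def Aopt : Fin 6 → Fin 3 := ![0, 1, 2, 2, 1, 0]

lemma Aopt_mms : ∀ i : Fin 3, 912 ≤ bz Aopt i := by decide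

lemma vz_pos : ∀ g : Fin 6, 0 < vz g := by decide

/-- there is an instance of three agents with identical additive valuations
over six goods whose maximin share is 912, for which every ex-ante proportional
sum-of-variances-minimizing distribution gives, in every allocation of its support, some
agent a bundle worth only 825 = (275/304)·912 < 912 — hence it is not MMS-fair ex-post. -/
theorem sov_minimizing_not_MMS_fair :
    ∃ v : Fin 6 → ℝ, (∀ g, 0 < v g) ∧
      (∀ A : Fin 6 → Fin 3, ∃ i : Fin 3, bval9 v A i ≤ 912) ∧
      (∃ A0 : Fin 6 → Fin 3, ∀ i : Fin 3, 912 ≤ bval9 v A0 i) ∧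
      (∀ p : (Fin 6 → Fin 3) → ℝ, IsPropDist9 v p →
        (∀ q : (Fin 6 → Fin 3) → ℝ, IsPropDist9 v q → sumVar9 v p ≤ sumVar9 v q) →
        ∀ A : Fin 6 → Fin 3, 0 < p A →
          ∃ i : Fin 3, bval9 v A i = 825 ∧ bval9 v A i = (275 / 304) * 912) := by
  refine ⟨vR, ?_, ?_, ?_, ?_⟩
  · intro g
    show (0:ℝ) < (vz g : ℝ)
    exact_mod_cast vz_pos g
  · intro A
    obtain ⟨i, hi⟩ := P1 A
    exact ⟨i, by rw [bval_cast]; exact_mod_cast hi⟩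
  · refine ⟨Aopt, fun i => ?_⟩
    rw [bval_cast]
    exact_mod_cast Aopt_mms i
  · intro p hp hmin A hA
    have hle : sumVar9 vR p ≤ 46050 := by
      have := hmin qstar qstar_prop
      rwa [qstar_sumVar] at this
    rw [sumVar_eq_s9 p hp] at hle
    obtain ⟨hnn, hsum, _⟩ := hp
    have hterm : ∀ B ∈ Finset.univ, (0:ℝ) ≤ p B * ((dz B : ℝ) - 46050) := by
      intro B _
      have h1 : (46050 : ℝ) ≤ (dz B : ℝ) := by exact_mod_cast P2 B
      have h2 := hnn B
      nlinarith
    have hsum0 : ∑ B : Fin 6 → Fin 3, p B * ((dz B : ℝ) - 46050) = 0 := by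
      have hle' : ∑ B : Fin 6 → Fin 3, p B * ((dz B : ℝ) - 46050) ≤ 0 := by
        have heq : ∑ B : Fin 6 → Fin 3, p B * ((dz B : ℝ) - 46050)
            = (∑ B : Fin 6 → Fin 3, p B * (dz B : ℝ)) - 46050 := by
          simp only [mul_sub, Finset.sum_sub_distrib, ← Finset.sum_mul, hsum, one_mul]
        rw [heq]
        linarith
      exact le_antisymm hle' (Finset.sum_nonneg hterm)
    have hzero := (Finset.sum_eq_zero_iff_of_nonneg hterm).mp hsum0 A (Finset.mem_univ A)
    have hdz : dz A = 46050 := by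
      have hgap : (dz A : ℝ) - 46050 = 0 := by
        rcases mul_eq_zero.mp hzero with h | h
        · exact absurd h (ne_of_gt hA)
        · exact h
      have : (dz A : ℝ) = 46050 := by linarith
      exact_mod_cast this
    obtain ⟨i, hi⟩ := P3 A hdz
    refine ⟨i, ?_, ?_⟩
    · rw [bval_cast]; exact_mod_cast hi
    · rw [bval_cast, hi]; norm_num
end

section
/- For two agents with additive valuations v1(a)=4, v1(b)=96, v2(a)=38, v2(b)=62 over goods {a,b}, every ex-ante proportional distribution D over the four allocations that minimizes the sum of variances Σ_i Var[v_i(A_i)] must place positive probability on an allocation that gives one agent the empty bundle; in particular D is not EF1 ex-post and gives no positive fraction of MMS ex-post to every agent in every supported allocation. -/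
/-- The two agents' valuations: v1 = (4, 96), v2 = (38, 62) on goods (a, b). -/
def vs12 : Fin 2 → Fin 2 → ℝ := ![![4, 96], ![38, 62]]

/-- Value of agent `i`'s bundle in allocation `A` (good `g` goes to agent `A g`). -/
def val12 (i : Fin 2) (A : Fin 2 → Fin 2) : ℝ := ∑ g, if A g = i then vs12 i g else 0

/-- Ex-ante proportional probability distribution over the four allocations. -/
def IsPropDist12 (p : (Fin 2 → Fin 2) → ℝ) : Prop :=
  (∀ A, 0 ≤ p A) ∧ (∑ A : Fin 2 → Fin 2, p A = 1) ∧
    ∀ i : Fin 2, 50 ≤ ∑ A : Fin 2 → Fin 2, p A * val12 i A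

/-- Sum of the two agents' variances under distribution `p`. -/
noncomputable def sumVar12 (p : (Fin 2 → Fin 2) → ℝ) : ℝ :=
  ∑ i : Fin 2, ∑ A : Fin 2 → Fin 2,
    p A * (val12 i A - ∑ B : Fin 2 → Fin 2, p B * val12 i B) ^ 2

/-- The maximin shares of the two agents: MMS₁ = 4, MMS₂ = 38. -/
def mms12 : Fin 2 → ℝ := ![4, 38]

lemma sum4 (f : (Fin 2 → Fin 2) → ℝ) :
    ∑ A : Fin 2 → Fin 2, f A = f ![0,0] + f ![0,1] + f ![1,0] + f ![1,1] := by
  rw [show (Finset.univ : Finset (Fin 2 → Fin 2)) = {![0,0], ![0,1], ![1,0], ![1,1]} from by decide]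
  rw [Finset.sum_insert (by decide), Finset.sum_insert (by decide),
    Finset.sum_insert (by decide), Finset.sum_singleton]
  ring

lemma v000 : val12 0 ![0,0] = 100 := by norm_num [val12, vs12, Fin.sum_univ_two]
lemma v001 : val12 0 ![0,1] = 4 := by norm_num [val12, vs12, Fin.sum_univ_two]
lemma v010 : val12 0 ![1,0] = 96 := by norm_num [val12, vs12, Fin.sum_univ_two]
lemma v011 : val12 0 ![1,1] = 0 := by norm_num [val12, vs12, Fin.sum_univ_two]
lemma v100 : val12 1 ![0,0] = 0 := by norm_num [val12, vs12, Fin.sum_univ_two]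
lemma v101 : val12 1 ![0,1] = 62 := by norm_num [val12, vs12, Fin.sum_univ_two]
lemma v110 : val12 1 ![1,0] = 38 := by norm_num [val12, vs12, Fin.sum_univ_two]
lemma v111 : val12 1 ![1,1] = 100 := by norm_num [val12, vs12, Fin.sum_univ_two]

/-- candidate distribution: 25/31 on ![1,0], 6/31 on ![1,1]. -/
noncomputable def qdist : (Fin 2 → Fin 2) → ℝ :=
  fun A => if A = ![1,0] then 25/31 else if A = ![1,1] then 6/31 else 0

lemma q00 : qdist ![0,0] = 0 := by
  simp only [qdist]; rw [if_neg (by decide), if_neg (by decide)]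
lemma q01 : qdist ![0,1] = 0 := by
  simp only [qdist]; rw [if_neg (by decide), if_neg (by decide)]
lemma q10 : qdist ![1,0] = 25/31 := by
  simp only [qdist]; simp
lemma q11 : qdist ![1,1] = 6/31 := by
  simp only [qdist]; rw [if_neg (by decide : ¬(![1,1] : Fin 2 → Fin 2) = ![1,0])]; simp

lemma qprop : IsPropDist12 qdist := by
  refine ⟨fun A => ?_, ?_, fun i => ?_⟩
  · simp only [qdist]; split
    · norm_num
    · split <;> norm_num
  · rw [sum4, q00, q01, q10, q11]; norm_num
  · revert i
    rw [Fin.forall_fin_two]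
    constructor
    · rw [sum4, q00, q01, q10, q11, v000, v001, v010, v011]; norm_num
    · rw [sum4, q00, q01, q10, q11, v100, v101, v110, v111]; norm_num

lemma qvar : sumVar12 qdist = 1959000/961 := by
  simp only [sumVar12, Fin.sum_univ_two]
  rw [sum4 (fun B => qdist B * val12 0 B), sum4 (fun B => qdist B * val12 1 B)]
  rw [sum4, sum4]
  simp only [q00, q01, q10, q11, v000, v001, v010, v011, v100, v101, v110, v111]
  norm_num

/-- every ex-ante proportional sum-of-variances-minimizing distribution for
this instance puts positive probability on an allocation giving some agent the empty
bundle; hence it is not EF1 ex-post, and for every ρ > 0 it fails to give every agent a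
ρ-fraction of her MMS in every supported allocation. -/
theorem sov_minimizer_fails_expost_fairness :
    ∀ p : (Fin 2 → Fin 2) → ℝ, IsPropDist12 p →
      (∀ q : (Fin 2 → Fin 2) → ℝ, IsPropDist12 q → sumVar12 p ≤ sumVar12 q) →
      (∃ A : Fin 2 → Fin 2, 0 < p A ∧ ∃ i : Fin 2, ∀ g : Fin 2, A g ≠ i) ∧
      (∃ A : Fin 2 → Fin 2, 0 < p A ∧
        ∃ i l : Fin 2, i ≠ l ∧ (∃ g, A g = l) ∧
          ∀ g : Fin 2, A g = l →
            val12 i A < (∑ h, if A h = l then vs12 i h else 0) - vs12 i g) ∧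
      (∀ ρ : ℝ, 0 < ρ →
        ∃ A : Fin 2 → Fin 2, 0 < p A ∧ ∃ i : Fin 2, val12 i A < ρ * mms12 i) := by
  intro p hp hmin
  obtain ⟨hnn, hsum, hprop⟩ := hp
  rw [sum4] at hsum
  have h0 := hprop 0
  have h1 := hprop 1
  rw [sum4] at h0 h1
  rw [v000, v001, v010, v011] at h0
  rw [v100, v101, v110, v111] at h1
  have hle := hmin qdist qprop
  rw [qvar] at hle
  have key : 0 < p ![0,0] ∨ 0 < p ![1,1] := by
    by_contra h
    push_neg at h
    have e0 : p ![0,0] = 0 := le_antisymm h.1 (hnn _)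
    have e3 : p ![1,1] = 0 := le_antisymm h.2 (hnn _)
    rw [e0, e3] at hsum h0 h1
    have e1 : p ![0,1] = 1/2 := by linarith
    have e2 : p ![1,0] = 1/2 := by linarith
    have hvar : sumVar12 p = 2260 := by
      simp only [sumVar12, Fin.sum_univ_two]
      rw [sum4 (fun B => p B * val12 0 B), sum4 (fun B => p B * val12 1 B)]
      rw [sum4, sum4]
      simp only [e0, e1, e2, e3, v000, v001, v010, v011, v100, v101, v110, v111]
      norm_num
    rw [hvar] at hle
    norm_num at hle
  rcases key with hpos | hpos
  · refine ⟨⟨![0,0], hpos, 1, by decide⟩, ⟨![0,0], hpos, 1, 0, by decide, ⟨0, by decide⟩, ?_⟩,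
      fun ρ hρ => ⟨![0,0], hpos, 1, ?_⟩⟩
    · intro g _
      rw [v100]
      fin_cases g <;> norm_num [vs12, Fin.sum_univ_two]
    · rw [v100]
      have : mms12 1 = 38 := by norm_num [mms12]
      rw [this]; positivity
  · refine ⟨⟨![1,1], hpos, 0, by decide⟩, ⟨![1,1], hpos, 0, 1, by decide, ⟨0, by decide⟩, ?_⟩,
      fun ρ hρ => ⟨![1,1], hpos, 0, ?_⟩⟩
    · intro g _
      rw [v011]
      fin_cases g <;> norm_num [vs12, Fin.sum_univ_two]
    · rw [v011]
      have : mms12 0 = 4 := by norm_num [mms12]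
      rw [this]; positivity
end
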